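/- In the setting of the previous statement, the function Q(p) = Var[Θ | γΘ + √γ G = Γ_γ^{-1}(p)] is 3M²-Lipschitz continuous in p. -/

import Mathlib

open MeasureTheory ProbabilityTheory

/-- Posterior (tilted) law of `Θ ~ π` given `γΘ + √γ G = s`. -/
noncomputable def tilt (π : Measure ℝ) (γ s : ℝ) : Measure ℝ :=
  ((π.withDensity fun θ => ENNReal.ofReal (Real.exp (s * θ - γ * θ ^ 2 / 2))) Set.univ)⁻¹ •
    π.withDensity fun θ => ENNReal.ofReal (Real.exp (s * θ - γ * θ ^ 2 / 2))

/-- Conditional mean `E[Θ | γΘ + √γ G = s]`. -/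
noncomputable def condMean (π : Measure ℝ) (γ s : ℝ) : ℝ := ∫ θ, θ ∂tilt π γ s

/-- Conditional variance `Var[Θ | γΘ + √γ G = s]`. -/
noncomputable def condVar (π : Measure ℝ) (γ s : ℝ) : ℝ :=
  ∫ θ, (θ - condMean π γ s) ^ 2 ∂tilt π γ s

/-- `Γ_γ(h) = ∫₀^h Var[Θ | γΘ + √γ G = s]^{1/2} ds`. -/
noncomputable def Gam (π : Measure ℝ) (γ h : ℝ) : ℝ :=
  ∫ s in (0 : ℝ)..h, Real.sqrt (condVar π γ s)

/-! The tilted law at `s` has density proportional to `e^{sθ - γθ²/2}`, so differentiating its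
moments under the integral sign shows that `s ↦ Var_s` has derivative the third central moment
`E_s[(Θ - m_s)³]`. As `|Θ - m_s| ≤ 2M`, this is at most `2M·Var_s ≤ 2M²·√Var_s = 2M²·Γ'(s)`, hence
`|Var_a - Var_b| ≤ 2M²·|Γ(a) - Γ(b)|` for all `a, b`, which is the Lipschitz bound for `Q`. -/

open Set

lemma ae_abs_le_of_measure_Icc_eq_one {μ : Measure ℝ} [IsProbabilityMeasure μ] {M : ℝ}
    (h : μ (Icc (-M) M) = 1) : ∀ᵐ θ ∂μ, |θ| ≤ M :=
  Filter.mem_of_superset ((mem_ae_iff_prob_eq_one measurableSet_Icc).2 h) fun _ hθ => abs_le.2 hθ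

lemma lipschitzOnWith_invFun_of_dist_le {α β δ : Type*} [Nonempty α] [PseudoMetricSpace β]
    [PseudoMetricSpace δ] {f : α → β} {g : α → δ} {K : NNReal}
    (h : ∀ a b, dist (g a) (g b) ≤ K * dist (f a) (f b)) :
    LipschitzOnWith K (fun p => g (Function.invFun f p)) (range f) := by
  rw [lipschitzOnWith_iff_dist_le_mul]
  rintro _ ⟨a, rfl⟩ _ ⟨b, rfl⟩
  simpa only [Function.invFun_eq ⟨a, rfl⟩, Function.invFun_eq ⟨b, rfl⟩] using
    h (Function.invFun f (f a)) (Function.invFun f (f b))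

lemma abs_sub_le_abs_integral_of_abs_deriv_le {f f' φ : ℝ → ℝ}
    (hf : ∀ x, HasDerivAt f (f' x) x) (hφ : Continuous φ) (hbound : ∀ x, |f' x| ≤ φ x) (a b : ℝ) :
    |f b - f a| ≤ |∫ x in a..b, φ x| := by
  have hcont : Continuous f := continuous_iff_continuousAt.2 fun x => (hf x).continuousAt
  have key : ∀ {c d : ℝ}, c ≤ d → |f d - f c| ≤ ∫ x in c..d, φ x := by
    intro c d hcd
    have upper := intervalIntegral.sub_le_integral_of_hasDeriv_right_of_le hcd hcont.continuousOn
      (fun x _ => (hf x).hasDerivWithinAt) hφ.integrableOn_Icc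
      fun x _ => (le_abs_self _).trans (hbound x)
    have lower := intervalIntegral.sub_le_integral_of_hasDeriv_right_of_le hcd
      hcont.neg.continuousOn (fun x _ => (hf x).neg.hasDerivWithinAt) hφ.integrableOn_Icc
      fun x _ => (neg_le_abs _).trans (hbound x)
    simp only [Pi.neg_apply] at lower
    exact abs_sub_le_iff.2 ⟨upper, by linarith⟩
  rcases le_total a b with hab | hba
  · exact (key hab).trans (le_abs_self _)
  · rw [abs_sub_comm, intervalIntegral.integral_symm, abs_neg]
    exact (key hba).trans (le_abs_self _)

lemma abs_integral_pow_three_le {α : Type*} [MeasurableSpace α] {ν : Measure α}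
    [IsFiniteMeasure ν] {f : α → ℝ} {C : ℝ} (hf : AEStronglyMeasurable f ν)
    (hC : ∀ᵐ x ∂ν, |f x| ≤ C) : |∫ x, f x ^ 3 ∂ν| ≤ C * ∫ x, f x ^ 2 ∂ν := by
  have hint : Integrable (fun x => f x ^ 2) ν :=
    Integrable.of_bound (hf.pow 2) (C ^ 2) <| hC.mono fun x hx => by
      rw [Real.norm_eq_abs, abs_pow]
      exact pow_le_pow_left₀ (abs_nonneg _) hx 2
  rw [← integral_const_mul]
  refine norm_integral_le_of_norm_le (G := ℝ) (hint.const_mul C) (hC.mono fun x hx => ?_)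
  rw [Real.norm_eq_abs, abs_pow, pow_succ', ← sq_abs (f x)]
  exact mul_le_mul_of_nonneg_right hx (sq_nonneg _)

lemma integrable_pow_of_ae_abs_le {ν : Measure ℝ} [IsFiniteMeasure ν] {M : ℝ}
    (hM : ∀ᵐ θ ∂ν, |θ| ≤ M) (k : ℕ) : Integrable (fun θ => θ ^ k) ν :=
  Integrable.of_bound (by fun_prop) (M ^ k) <| hM.mono fun θ hθ => by
    rw [Real.norm_eq_abs, abs_pow]
    exact pow_le_pow_left₀ (abs_nonneg θ) hθ k

lemma integral_add_pow_of_ae_abs_le {ν : Measure ℝ} [IsFiniteMeasure ν] {M : ℝ}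
    (hM : ∀ᵐ θ ∂ν, |θ| ≤ M) (c : ℝ) (n : ℕ) :
    ∫ θ, (θ + c) ^ n ∂ν
      = ∑ k ∈ Finset.range (n + 1), (∫ θ, θ ^ k ∂ν) * c ^ (n - k) * n.choose k := by
  simp_rw [add_pow]
  rw [integral_finsetSum _ fun k _ => ((integrable_pow_of_ae_abs_le hM k).mul_const _).mul_const _]
  simp_rw [integral_mul_const]

noncomputable def tiltWeight (γ s θ : ℝ) : ℝ := Real.exp (s * θ - γ * θ ^ 2 / 2)

noncomputable def tiltMoment (π : Measure ℝ) (γ : ℝ) (k : ℕ) (s : ℝ) : ℝ :=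
  ∫ θ, θ ^ k * tiltWeight γ s θ ∂π

lemma tiltWeight_pos (γ s θ : ℝ) : 0 < tiltWeight γ s θ := Real.exp_pos _

lemma tiltWeight_le {γ s θ S M : ℝ} (hs : |s| ≤ S) (hθ : |θ| ≤ M) :
    tiltWeight γ s θ ≤ Real.exp (S * M + |γ| * M ^ 2 / 2) := by
  have hsθ : s * θ ≤ S * M := (le_abs_self _).trans <| by
    rw [abs_mul]; exact mul_le_mul hs hθ (abs_nonneg _) ((abs_nonneg _).trans hs)
  have hγθ : -(γ * θ ^ 2) ≤ |γ| * M ^ 2 := (neg_le_abs _).trans <| by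
    rw [abs_mul, abs_pow]
    exact mul_le_mul_of_nonneg_left (pow_le_pow_left₀ (abs_nonneg θ) hθ 2) (abs_nonneg γ)
  exact Real.exp_le_exp.2 (by linarith)

lemma norm_pow_mul_tiltWeight_le {γ s θ S M : ℝ} (k : ℕ) (hs : |s| ≤ S) (hθ : |θ| ≤ M) :
    ‖θ ^ k * tiltWeight γ s θ‖ ≤ M ^ k * Real.exp (S * M + |γ| * M ^ 2 / 2) := by
  rw [norm_mul, norm_pow, Real.norm_eq_abs, Real.norm_of_nonneg (tiltWeight_pos γ s θ).le]
  exact mul_le_mul (pow_le_pow_left₀ (abs_nonneg θ) hθ k) (tiltWeight_le hs hθ)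
    (tiltWeight_pos γ s θ).le (pow_nonneg ((abs_nonneg θ).trans hθ) k)

lemma tiltMoment_zero_nonneg (π : Measure ℝ) (γ s : ℝ) : 0 ≤ tiltMoment π γ 0 s :=
  integral_nonneg fun θ => by simpa using (tiltWeight_pos γ s θ).le

lemma ae_abs_le_tilt {π : Measure ℝ} {M : ℝ} (hM : ∀ᵐ θ ∂π, |θ| ≤ M) (γ s : ℝ) :
    ∀ᵐ θ ∂tilt π γ s, |θ| ≤ M :=
  ((withDensity_absolutelyContinuous _ _).smul_left _).ae_le hM

section Tilt

variable {π : Measure ℝ} [IsFiniteMeasure π] {M : ℝ}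

lemma integrable_pow_mul_tiltWeight (hM : ∀ᵐ θ ∂π, |θ| ≤ M) (γ : ℝ) (k : ℕ) (s : ℝ) :
    Integrable (fun θ => θ ^ k * tiltWeight γ s θ) π :=
  Integrable.of_bound (by unfold tiltWeight; fun_prop) _ <|
    hM.mono fun _ hθ => norm_pow_mul_tiltWeight_le k le_rfl hθ

lemma tiltMoment_zero_pos [NeZero π] (hM : ∀ᵐ θ ∂π, |θ| ≤ M) (γ s : ℝ) :
    0 < tiltMoment π γ 0 s := by
  have hint := integrable_pow_mul_tiltWeight hM γ 0 s
  simp only [pow_zero, one_mul, tiltWeight] at hint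
  simpa [tiltMoment, tiltWeight] using integral_exp_pos hint

lemma hasDerivAt_tiltMoment (hM : ∀ᵐ θ ∂π, |θ| ≤ M) (γ : ℝ) (k : ℕ) (s : ℝ) :
    HasDerivAt (tiltMoment π γ k) (tiltMoment π γ (k + 1) s) s := by
  refine (hasDerivAt_integral_of_dominated_loc_of_deriv_le
    (F := fun x θ => θ ^ k * tiltWeight γ x θ) (F' := fun x θ => θ ^ (k + 1) * tiltWeight γ x θ)
    (Metric.ball_mem_nhds s one_pos)
    (Filter.Eventually.of_forall fun x => (integrable_pow_mul_tiltWeight hM γ k x).1)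
    (integrable_pow_mul_tiltWeight hM γ k s)
    (integrable_pow_mul_tiltWeight hM γ (k + 1) s).1 ?_
    (integrable_const (M ^ (k + 1) * Real.exp ((|s| + 1) * M + |γ| * M ^ 2 / 2))) ?_).2
  · filter_upwards [hM] with θ hθ x hx
    refine norm_pow_mul_tiltWeight_le (k + 1) ?_ hθ
    have := abs_sub_abs_le_abs_sub x s
    rw [Metric.mem_ball, Real.dist_eq] at hx
    linarith
  · refine Filter.Eventually.of_forall fun θ x _ => ?_
    have hexp : HasDerivAt (fun y => tiltWeight γ y θ) (tiltWeight γ x θ * θ) x :=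
      ((hasDerivAt_mul_const θ).sub_const _).exp
    exact (hexp.const_mul (θ ^ k)).congr_deriv (by ring)

lemma withDensity_tiltWeight_univ (hM : ∀ᵐ θ ∂π, |θ| ≤ M) (γ s : ℝ) :
    π.withDensity (fun θ => ENNReal.ofReal (tiltWeight γ s θ)) univ
      = ENNReal.ofReal (tiltMoment π γ 0 s) := by
  have hint := integrable_pow_mul_tiltWeight hM γ 0 s
  simp only [pow_zero, one_mul] at hint
  rw [withDensity_apply _ MeasurableSet.univ, Measure.restrict_univ,
    ← ofReal_integral_eq_lintegral_ofReal hint (ae_of_all _ fun θ => (tiltWeight_pos γ s θ).le)]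
  simp [tiltMoment]

lemma integral_tilt (hM : ∀ᵐ θ ∂π, |θ| ≤ M) (γ s : ℝ) (g : ℝ → ℝ) :
    ∫ θ, g θ ∂tilt π γ s = (tiltMoment π γ 0 s)⁻¹ * ∫ θ, g θ * tiltWeight γ s θ ∂π := by
  change ∫ θ, g θ ∂(((π.withDensity fun θ => ENNReal.ofReal (tiltWeight γ s θ)) univ)⁻¹ •
    π.withDensity fun θ => ENNReal.ofReal (tiltWeight γ s θ)) = _
  rw [integral_smul_measure, withDensity_tiltWeight_univ hM, ENNReal.toReal_inv,
    ENNReal.toReal_ofReal (tiltMoment_zero_nonneg π γ s),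
    integral_withDensity_eq_integral_toReal_smul (by unfold tiltWeight; fun_prop)
      (ae_of_all _ fun _ => ENNReal.ofReal_lt_top)]
  simp_rw [ENNReal.toReal_ofReal (tiltWeight_pos γ s _).le, smul_eq_mul,
    mul_comm (tiltWeight γ s _)]

lemma integral_pow_tilt (hM : ∀ᵐ θ ∂π, |θ| ≤ M) (γ : ℝ) (k : ℕ) (s : ℝ) :
    ∫ θ, θ ^ k ∂tilt π γ s = tiltMoment π γ k s / tiltMoment π γ 0 s := by
  rw [integral_tilt hM, inv_mul_eq_div]
  rfl

lemma condMean_eq (hM : ∀ᵐ θ ∂π, |θ| ≤ M) (γ s : ℝ) :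
    condMean π γ s = tiltMoment π γ 1 s / tiltMoment π γ 0 s := by
  simpa [condMean] using integral_pow_tilt hM γ 1 s

variable [NeZero π]

lemma isProbabilityMeasure_tilt (hM : ∀ᵐ θ ∂π, |θ| ≤ M) (γ s : ℝ) :
    IsProbabilityMeasure (tilt π γ s) := by
  constructor
  change (((π.withDensity fun θ => ENNReal.ofReal (tiltWeight γ s θ)) univ)⁻¹ •
    π.withDensity fun θ => ENNReal.ofReal (tiltWeight γ s θ)) univ = 1
  rw [Measure.smul_apply, smul_eq_mul, withDensity_tiltWeight_univ hM]
  exact ENNReal.inv_mul_cancel (by simpa using tiltMoment_zero_pos hM γ s) ENNReal.ofReal_ne_top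

lemma integral_sub_condMean_pow (hM : ∀ᵐ θ ∂π, |θ| ≤ M) (γ : ℝ) (n : ℕ) (s : ℝ) :
    ∫ θ, (θ - condMean π γ s) ^ n ∂tilt π γ s
      = ∑ k ∈ Finset.range (n + 1), tiltMoment π γ k s / tiltMoment π γ 0 s
          * (-(tiltMoment π γ 1 s / tiltMoment π γ 0 s)) ^ (n - k) * n.choose k := by
  have := isProbabilityMeasure_tilt hM γ s
  simp_rw [sub_eq_add_neg, integral_add_pow_of_ae_abs_le (ae_abs_le_tilt hM γ s),
    integral_pow_tilt hM, condMean_eq hM]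

lemma condVar_eq (hM : ∀ᵐ θ ∂π, |θ| ≤ M) (γ s : ℝ) :
    condVar π γ s = tiltMoment π γ 2 s / tiltMoment π γ 0 s
      - (tiltMoment π γ 1 s / tiltMoment π γ 0 s) ^ 2 := by
  have h0 := (tiltMoment_zero_pos hM γ s).ne'
  rw [_root_.condVar, integral_sub_condMean_pow hM]
  simp only [Finset.sum_range_succ, Finset.sum_range_zero, Nat.reduceSub, Nat.choose_self,
    Nat.choose_zero_right, Nat.choose_succ_self_right]
  field_simp
  ring

lemma integral_sub_condMean_pow_three (hM : ∀ᵐ θ ∂π, |θ| ≤ M) (γ s : ℝ) :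
    ∫ θ, (θ - condMean π γ s) ^ 3 ∂tilt π γ s
      = tiltMoment π γ 3 s / tiltMoment π γ 0 s
        - 3 * (tiltMoment π γ 1 s / tiltMoment π γ 0 s)
          * (tiltMoment π γ 2 s / tiltMoment π γ 0 s)
        + 2 * (tiltMoment π γ 1 s / tiltMoment π γ 0 s) ^ 3 := by
  have h0 := (tiltMoment_zero_pos hM γ s).ne'
  rw [integral_sub_condMean_pow hM]
  simp only [Finset.sum_range_succ, Finset.sum_range_zero, Nat.reduceSub, Nat.choose_self,
    Nat.choose_zero_right, Nat.choose_one_right, Nat.choose_succ_self_right, Nat.cast_ofNat]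
  field_simp
  ring

lemma hasDerivAt_condVar (hM : ∀ᵐ θ ∂π, |θ| ≤ M) (γ s : ℝ) :
    HasDerivAt (condVar π γ) (∫ θ, (θ - condMean π γ s) ^ 3 ∂tilt π γ s) s := by
  have h0 := (tiltMoment_zero_pos hM γ s).ne'
  have d : ∀ k, HasDerivAt (tiltMoment π γ k) (tiltMoment π γ (k + 1) s) s :=
    fun k => hasDerivAt_tiltMoment hM γ k s
  rw [funext (condVar_eq hM γ), integral_sub_condMean_pow_three hM]
  refine (((d 2).div (d 0) h0).sub (((d 1).div (d 0) h0).pow 2)).congr_deriv ?_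
  simp only [Pi.div_apply, Nat.cast_ofNat, Nat.add_one_sub_one, pow_one]
  field_simp
  ring

lemma abs_condMean_le (hM : ∀ᵐ θ ∂π, |θ| ≤ M) (γ s : ℝ) : |condMean π γ s| ≤ M := by
  have := isProbabilityMeasure_tilt hM γ s
  simpa [condMean] using
    norm_integral_le_of_norm_le_const (f := fun θ : ℝ => θ) (ae_abs_le_tilt hM γ s)

lemma condVar_le_sq (hM : ∀ᵐ θ ∂π, |θ| ≤ M) (γ s : ℝ) : condVar π γ s ≤ M ^ 2 := by
  have := isProbabilityMeasure_tilt hM γ s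
  have hsq : ∫ θ, θ ^ 2 ∂tilt π γ s ≤ M ^ 2 := by
    refine (le_abs_self _).trans ?_
    simpa using norm_integral_le_of_norm_le_const (f := fun θ : ℝ => θ ^ 2) <|
      (ae_abs_le_tilt hM γ s).mono fun θ hθ => by
      rw [norm_pow, Real.norm_eq_abs]
      exact pow_le_pow_left₀ (abs_nonneg θ) hθ 2
  rw [condVar_eq hM, ← integral_pow_tilt hM γ 2]
  nlinarith [sq_nonneg (tiltMoment π γ 1 s / tiltMoment π γ 0 s)]

lemma abs_integral_sub_condMean_pow_three_le (hM : ∀ᵐ θ ∂π, |θ| ≤ M) (γ s : ℝ) :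
    |∫ θ, (θ - condMean π γ s) ^ 3 ∂tilt π γ s| ≤ 2 * M ^ 2 * Real.sqrt (condVar π γ s) := by
  have := isProbabilityMeasure_tilt hM γ s
  have hm := abs_condMean_le hM γ s
  have hM0 : 0 ≤ M := (abs_nonneg _).trans hm
  have hV : 0 ≤ condVar π γ s := integral_nonneg fun θ => sq_nonneg _
  have hcentered : ∀ᵐ θ ∂tilt π γ s, |θ - condMean π γ s| ≤ 2 * M :=
    (ae_abs_le_tilt hM γ s).mono fun θ hθ => by linarith [abs_sub θ (condMean π γ s)]
  calc |∫ θ, (θ - condMean π γ s) ^ 3 ∂tilt π γ s| ≤ 2 * M * condVar π γ s :=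
        abs_integral_pow_three_le (by fun_prop) hcentered
    _ = 2 * M * (Real.sqrt (condVar π γ s) * Real.sqrt (condVar π γ s)) := by
        rw [Real.mul_self_sqrt hV]
    _ ≤ 2 * M * (M * Real.sqrt (condVar π γ s)) := by
        refine mul_le_mul_of_nonneg_left (mul_le_mul_of_nonneg_right ?_ (Real.sqrt_nonneg _))
          (by positivity)
        exact Real.sqrt_le_iff.2 ⟨hM0, condVar_le_sq hM γ s⟩
    _ = 2 * M ^ 2 * Real.sqrt (condVar π γ s) := by ring

lemma abs_condVar_sub_le (hM : ∀ᵐ θ ∂π, |θ| ≤ M) (γ a b : ℝ) :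
    |condVar π γ b - condVar π γ a| ≤ 2 * M ^ 2 * |Gam π γ b - Gam π γ a| := by
  have hV : Continuous (condVar π γ) :=
    continuous_iff_continuousAt.2 fun s => (hasDerivAt_condVar hM γ s).continuousAt
  have hsqrt : Continuous fun s => Real.sqrt (condVar π γ s) := hV.sqrt
  calc |condVar π γ b - condVar π γ a|
      ≤ |∫ s in a..b, 2 * M ^ 2 * Real.sqrt (condVar π γ s)| :=
        abs_sub_le_abs_integral_of_abs_deriv_le (hasDerivAt_condVar hM γ)
          (continuous_const.mul hsqrt) (abs_integral_sub_condMean_pow_three_le hM γ) a b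
    _ = 2 * M ^ 2 * |Gam π γ b - Gam π γ a| := by
        rw [intervalIntegral.integral_const_mul, abs_mul, abs_of_nonneg (by positivity), Gam, Gam,
          intervalIntegral.integral_interval_sub_left (hsqrt.intervalIntegrable 0 b)
            (hsqrt.intervalIntegrable 0 a)]

end Tilt

theorem stmt13_general (M : NNReal) (π : Measure ℝ) [IsProbabilityMeasure π]
    (hsupp : π (Set.Icc (-(M : ℝ)) (M : ℝ)) = 1) (γ : ℝ) :
    LipschitzOnWith (3 * M ^ 2)
      (fun p => condVar π γ (Function.invFun (Gam π γ) p))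
      (Set.range (Gam π γ)) := by
  have hM : ∀ᵐ θ ∂π, |θ| ≤ (M : ℝ) := ae_abs_le_of_measure_Icc_eq_one hsupp
  refine (lipschitzOnWith_invFun_of_dist_le (K := 2 * M ^ 2) fun a b => ?_).weaken
    (by gcongr; norm_num)
  simpa [Real.dist_eq] using abs_condVar_sub_le hM γ b a

/-- Lemma D-p: if `π_Θ` is supported in `[-M, M]` and `γ > 0`,
then `Q(p) = Var[Θ | γΘ + √γ G = Γ_γ⁻¹(p)]` is `3M²`-Lipschitz on the range of `Γ_γ`. -/
theorem stmt13 (M : NNReal) (π : Measure ℝ) [IsProbabilityMeasure π]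
    (hsupp : π (Set.Icc (-(M : ℝ)) (M : ℝ)) = 1) (γ : ℝ) (hγ : 0 < γ) :
    LipschitzOnWith (3 * M ^ 2)
      (fun p => condVar π γ (Function.invFun (Gam π γ) p))
      (Set.range (Gam π γ)) :=
  stmt13_general M π hsupp γ
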